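/- Let B ⊆ P be a coalgebra-Galois C-extension with canonical entwining ψ and translation map τ(c) = c^[1] ⊗_B c^[2]. Then: (1) the set GT^C(B ⊆ P) of convolution-invertible linear maps f : C → P satisfying 1₍₀₎ f(1₍₁₎) = 1 and ψ ∘ (id ⊗ f) ∘ Δ = (f ⊗ id) ∘ Δ is a group under the convolution product; (2) the assignments f ↦ F_f with F_f(p) = p₍₀₎ f(p₍₁₎), and F ↦ f_F with f_F(c) = c^[1] F(c^[2]), define mutually inverse group isomorphisms between GT^C(B ⊆ P) and the group GA^C(B ⊆ P) of gauge automorphisms of B ⊆ P (with group law the opposite composition). -/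
import Mathlib


/-!
STATEMENT 19. For a coalgebra-Galois C-extension B ⊆ P with canonical
entwining ψ: (1) the convolution-invertible maps f : C → P with
1₍₀₎f(1₍₁₎) = 1 and ψ∘(id ⊗ f)∘Δ = (f ⊗ id)∘Δ form a group GT^C(B ⊆ P) under
convolution; (2) f ↦ F_f, F_f(p) = p₍₀₎f(p₍₁₎), and F ↦ f_F,
f_F(c) = c^[1]F(c^[2]), are mutually inverse group isomorphisms between
GT^C(B ⊆ P) and the group of gauge automorphisms (with opposite composition).
-/

open TensorProduct LinearMap
set_option linter.unusedSectionVars false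
set_option linter.unusedVariables false
set_option synthInstance.maxHeartbeats 1000000
set_option maxHeartbeats 1000000

noncomputable section

namespace CGal

variable {k : Type*} [Field k]
variable {P C : Type*} [Ring P] [Algebra k P]
  [AddCommGroup C] [Module k C] [Coalgebra k C]

/-- The coaction invariants `P^{coC}`. -/
def coinv (δ : P →ₗ[k] P ⊗[k] C) : Set P :=
  {b : P | ∀ p : P, δ (b * p) = b • δ p}

/-- `δ` is a (counital, coassociative) right `C`-coaction on `P`. -/
def IsCoaction (δ : P →ₗ[k] P ⊗[k] C) : Prop :=
  (∀ p : P, (TensorProduct.rid k P) ((lTensor P (Coalgebra.counit : C →ₗ[k] k)) (δ p)) = p) ∧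
  (∀ p : P, (rTensor C δ) (δ p)
      = (TensorProduct.assoc k P C C).symm
          ((lTensor P (Coalgebra.comul : C →ₗ[k] C ⊗[k] C)) (δ p)))

/-- The kernel of `P ⊗ P → P ⊗_B P` for `B = P^{coC}`. -/
def galRel (δ : P →ₗ[k] P ⊗[k] C) : Submodule k (P ⊗[k] P) :=
  Submodule.span k
    {x | ∃ p b p', b ∈ coinv δ ∧ x = (p * b) ⊗ₜ[k] p' - p ⊗ₜ[k] (b * p')}

/-- The lifted canonical map `~can : P ⊗ P → P ⊗ C`. -/
def canLift (δ : P →ₗ[k] P ⊗[k] C) : P ⊗[k] P →ₗ[k] P ⊗[k] C :=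
  (TensorProduct.map (LinearMap.mul' k P) LinearMap.id)
    ∘ₗ (TensorProduct.assoc k P P C).symm.toLinearMap
    ∘ₗ (lTensor P δ)

/-- The extension `P^{coC} ⊆ P` is coalgebra-Galois. -/
def IsCGalois (δ : P →ₗ[k] P ⊗[k] C) : Prop :=
  Function.Surjective (canLift δ) ∧ LinearMap.ker (canLift δ) = galRel δ

/-- The bow-tie axioms of an entwining structure `(P, C, ψ)`. -/
def IsEntwining (ψ : C ⊗[k] P →ₗ[k] P ⊗[k] C) : Prop :=
  (ψ ∘ₗ (lTensor C (LinearMap.mul' k P))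
     = (rTensor C (LinearMap.mul' k P))
        ∘ₗ (TensorProduct.assoc k P P C).symm.toLinearMap
        ∘ₗ (lTensor P ψ)
        ∘ₗ (TensorProduct.assoc k P C P).toLinearMap
        ∘ₗ (rTensor P ψ)
        ∘ₗ (TensorProduct.assoc k C P P).symm.toLinearMap) ∧
  (∀ c : C, ψ (c ⊗ₜ[k] (1 : P)) = (1 : P) ⊗ₜ[k] c) ∧
  ((lTensor P (Coalgebra.comul : C →ₗ[k] C ⊗[k] C)) ∘ₗ ψ
     = (TensorProduct.assoc k P C C).toLinearMap
        ∘ₗ (rTensor C ψ)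
        ∘ₗ (TensorProduct.assoc k C P C).symm.toLinearMap
        ∘ₗ (lTensor C ψ)
        ∘ₗ (TensorProduct.assoc k C C P).toLinearMap
        ∘ₗ (rTensor P (Coalgebra.comul : C →ₗ[k] C ⊗[k] C))) ∧
  ((TensorProduct.rid k P).toLinearMap
      ∘ₗ (lTensor P (Coalgebra.counit : C →ₗ[k] k)) ∘ₗ ψ
     = (TensorProduct.lid k P).toLinearMap
      ∘ₗ (rTensor P (Coalgebra.counit : C →ₗ[k] k)))

/-- `P` is an entwined module in `M_P^C(ψ)`. -/
def IsEntwinedOn (δ : P →ₗ[k] P ⊗[k] C) (ψ : C ⊗[k] P →ₗ[k] P ⊗[k] C) : Prop :=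
  ∀ m p : P,
    δ (m * p)
      = ((rTensor C (LinearMap.mul' k P))
          ∘ₗ (TensorProduct.assoc k P P C).symm.toLinearMap
          ∘ₗ (lTensor P ψ)
          ∘ₗ (TensorProduct.assoc k P C P).toLinearMap)
        ((δ m) ⊗ₜ[k] p)

/-- The convolution product `(f * g)(c) = f(c₍₁₎) g(c₍₂₎)`. -/
def conv (f g : C →ₗ[k] P) : C →ₗ[k] P :=
  (LinearMap.mul' k P) ∘ₗ (TensorProduct.map f g)
    ∘ₗ (Coalgebra.comul : C →ₗ[k] C ⊗[k] C)

/-- The convolution unit `c ↦ ε(c)1`. -/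
def convUnit : C →ₗ[k] P :=
  (Algebra.linearMap k P) ∘ₗ (Coalgebra.counit : C →ₗ[k] k)

/-- A gauge transformation of the extension `P^{coC} ⊆ P` (an element of
`GT^C(B ⊆ P)`). -/
def IsGaugeTransform (δ : P →ₗ[k] P ⊗[k] C) (ψ : C ⊗[k] P →ₗ[k] P ⊗[k] C)
    (f : C →ₗ[k] P) : Prop :=
  (∃ g : C →ₗ[k] P, conv f g = convUnit ∧ conv g f = convUnit) ∧
  ((LinearMap.mul' k P) ((lTensor P f) (δ 1)) = 1) ∧
  (ψ ∘ₗ (lTensor C f) ∘ₗ (Coalgebra.comul : C →ₗ[k] C ⊗[k] C)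
     = (rTensor C f) ∘ₗ (Coalgebra.comul : C →ₗ[k] C ⊗[k] C))

/-- A gauge automorphism: a unital left `B`-linear right `C`-colinear
bijection `F : P → P`. -/
def IsGaugeAuto (δ : P →ₗ[k] P ⊗[k] C) (F : P →ₗ[k] P) : Prop :=
  Function.Bijective F ∧ F 1 = 1 ∧
  (∀ b ∈ coinv δ, ∀ p : P, F (b * p) = b * F p) ∧
  (∀ p : P, δ (F p) = (rTensor C F) (δ p))

/-- `F_f(p) = p₍₀₎ f(p₍₁₎)`. -/
def autoOf (δ : P →ₗ[k] P ⊗[k] C) (f : C →ₗ[k] P) : P →ₗ[k] P :=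
  (LinearMap.mul' k P) ∘ₗ (lTensor P f) ∘ₗ δ

/-- `f_F(c) = c^[1] F(c^[2])` (computed from a linear lift `t` of the
translation map). -/
def transformOf (t : C →ₗ[k] P ⊗[k] P) (F : P →ₗ[k] P) : C →ₗ[k] P :=
  (LinearMap.mul' k P) ∘ₗ (lTensor P F) ∘ₗ t

-- ### infrastructure

def rhoA : P ⊗[k] (P ⊗[k] C) →ₗ[k] P ⊗[k] C :=
  (LinearMap.mul' k P).rTensor C ∘ₗ (TensorProduct.assoc k P P C).symm.toLinearMap

lemma rhoA_tmul (x : P) (m : P ⊗[k] C) :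
    rhoA (x ⊗ₜ m) = rTensor C (mulLeft k x) m := by
  induction m using TensorProduct.induction_on with
  | zero => simp [rhoA]
  | tmul a c => simp [rhoA]
  | add m n hm hn => simp only [tmul_add, map_add, hm, hn]

lemma smul_eq_rT (b : P) (x : P ⊗[k] C) : b • x = rTensor C (mulLeft k b) x := by
  induction x using TensorProduct.induction_on with
  | zero => simp
  | tmul a c => simp [TensorProduct.smul_tmul', smul_eq_mul]
  | add x y hx hy => simp [smul_add, hx, hy]

lemma rT_mulLeft_mul (a b : P) (x : P ⊗[k] C) : rTensor C (mulLeft k (a*b)) x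
    = rTensor C (mulLeft k a) (rTensor C (mulLeft k b) x) := by
  rw [LinearMap.mulLeft_mul, ← rTensor_comp_apply]

lemma rT_mulLeft_one (x : P ⊗[k] C) : rTensor C (mulLeft k (1:P)) x = x := by
  rw [LinearMap.mulLeft_one]; simp

def PhiPsi (ψ : C ⊗[k] P →ₗ[k] P ⊗[k] C) : (P ⊗[k] C) ⊗[k] P →ₗ[k] P ⊗[k] C :=
  rhoA ∘ₗ lTensor P ψ ∘ₗ (TensorProduct.assoc k P C P).toLinearMap

lemma canLift_tmul (δ : P →ₗ[k] P ⊗[k] C) (p q : P) :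
    canLift δ (p ⊗ₜ q) = rTensor C (mulLeft k p) (δ q) := by
  simp only [canLift, coe_comp, Function.comp_apply, LinearEquiv.coe_coe, lTensor_tmul]
  induction δ q using TensorProduct.induction_on with
  | zero => simp
  | tmul a c => simp
  | add x y hx hy => simp only [tmul_add, map_add, hx, hy]

lemma mu_lT_rT (f : C →ₗ[k] P) (u : P) (x : P ⊗[k] C) :
    LinearMap.mul' k P (lTensor P f (rTensor C (mulLeft k u) x))
      = u * LinearMap.mul' k P (lTensor P f x) := by
  induction x using TensorProduct.induction_on with
  | zero => simp
  | tmul a c => simp [mul_assoc]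
  | add x y hx hy => simp only [map_add, hx, hy, mul_add]

lemma delta_mul {δ : P →ₗ[k] P ⊗[k] C} {ψ : C ⊗[k] P →ₗ[k] P ⊗[k] C}
    (hent : IsEntwinedOn δ ψ) (f : C →ₗ[k] P) (x : P ⊗[k] C) :
    δ (LinearMap.mul' k P (lTensor P f x)) = PhiPsi ψ (TensorProduct.map δ f x) := by
  induction x using TensorProduct.induction_on with
  | zero => simp
  | tmul a c =>
      have := hent a (f c)
      simp only [map_tmul, lTensor_tmul, mul'_apply] at this ⊢
      rw [this]; simp [PhiPsi, rhoA]
  | add x y hx hy => simp only [map_add, hx, hy]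

lemma map_eq_lT_rT (δ : P →ₗ[k] P ⊗[k] C) (f : C →ₗ[k] P) (x : P ⊗[k] C) :
    TensorProduct.map δ f x = lTensor (P ⊗[k] C) f (rTensor C δ x) := by
  induction x using TensorProduct.induction_on with
  | zero => simp
  | tmul a c => simp
  | add x y hx hy => simp only [map_add, hx, hy]

lemma N0e (ψ : C ⊗[k] P →ₗ[k] P ⊗[k] C) (f : C →ₗ[k] P) (w : P ⊗[k] (C ⊗[k] C)) :
    PhiPsi ψ (lTensor (P ⊗[k] C) f ((TensorProduct.assoc k P C C).symm w))
      = rhoA (lTensor P (ψ ∘ₗ lTensor C f) w) := by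
  induction w using TensorProduct.induction_on with
  | zero => simp
  | tmul a y =>
      induction y using TensorProduct.induction_on with
      | zero => simp
      | tmul c c' => simp [PhiPsi, rhoA_tmul]
      | add y z hy hz => simp only [tmul_add, map_add, hy, hz]
  | add w w' hw hw' => simp only [map_add, hw, hw']

lemma N3e (f : C →ₗ[k] P) (w : P ⊗[k] (C ⊗[k] C)) :
    rTensor C (LinearMap.mul' k P ∘ₗ lTensor P f) ((TensorProduct.assoc k P C C).symm w)
      = rhoA (lTensor P (rTensor C f) w) := by
  induction w using TensorProduct.induction_on with
  | zero => simp
  | tmul a y =>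
      induction y using TensorProduct.induction_on with
      | zero => simp
      | tmul c c' => simp [rhoA_tmul]
      | add y z hy hz => simp only [tmul_add, map_add, hy, hz]
  | add w w' hw hw' => simp only [map_add, hw, hw']

lemma half1 {δ : P →ₗ[k] P ⊗[k] C} {ψ : C ⊗[k] P →ₗ[k] P ⊗[k] C}
    (hδ2 : ∀ p : P, (rTensor C δ) (δ p)
      = (TensorProduct.assoc k P C C).symm
          ((lTensor P (Coalgebra.comul : C →ₗ[k] C ⊗[k] C)) (δ p)))
    (hent : IsEntwinedOn δ ψ) (f : C →ₗ[k] P) (v : P) :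
    δ (autoOf δ f v)
      = rhoA (lTensor P (ψ ∘ₗ lTensor C f ∘ₗ (Coalgebra.comul : C →ₗ[k] C ⊗[k] C)) (δ v)) := by
  have h1 : δ (autoOf δ f v) = PhiPsi ψ (TensorProduct.map δ f (δ v)) := by
    simpa [autoOf] using delta_mul hent f (δ v)
  rw [h1, map_eq_lT_rT, hδ2 v, N0e]
  rw [← comp_assoc, ← lTensor_comp_apply]

lemma half2 {δ : P →ₗ[k] P ⊗[k] C}
    (hδ2 : ∀ p : P, (rTensor C δ) (δ p)
      = (TensorProduct.assoc k P C C).symm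
          ((lTensor P (Coalgebra.comul : C →ₗ[k] C ⊗[k] C)) (δ p)))
    (f : C →ₗ[k] P) (v : P) :
    rTensor C (autoOf δ f) (δ v)
      = rhoA (lTensor P (rTensor C f ∘ₗ (Coalgebra.comul : C →ₗ[k] C ⊗[k] C)) (δ v)) := by
  have h0 : autoOf δ f = (LinearMap.mul' k P ∘ₗ lTensor P f) ∘ₗ δ := by
    rw [autoOf, comp_assoc]
  rw [h0, rTensor_comp, coe_comp, Function.comp_apply, hδ2 v, N3e, ← lTensor_comp_apply]

lemma Ff_colinear {δ : P →ₗ[k] P ⊗[k] C} {ψ : C ⊗[k] P →ₗ[k] P ⊗[k] C}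
    (hδ2 : ∀ p : P, (rTensor C δ) (δ p)
      = (TensorProduct.assoc k P C C).symm
          ((lTensor P (Coalgebra.comul : C →ₗ[k] C ⊗[k] C)) (δ p)))
    (hent : IsEntwinedOn δ ψ) {f : C →ₗ[k] P}
    (hcolin : ψ ∘ₗ (lTensor C f) ∘ₗ (Coalgebra.comul : C →ₗ[k] C ⊗[k] C)
      = (rTensor C f) ∘ₗ (Coalgebra.comul : C →ₗ[k] C ⊗[k] C)) (v : P) :
    δ (autoOf δ f v) = rTensor C (autoOf δ f) (δ v) := by
  rw [half1 hδ2 hent f v, hcolin, half2 hδ2 f v]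


lemma G1 (g : C →ₗ[k] P) (F' : P →ₗ[k] P) (x : P ⊗[k] C) :
    LinearMap.mul' k P (lTensor P g (rTensor C F' x))
      = LinearMap.mul' k P (TensorProduct.map F' g x) := by
  induction x using TensorProduct.induction_on with
  | zero => simp
  | tmul a c => simp
  | add x y hx hy => simp only [map_add, hx, hy]

lemma G2 (δ : P →ₗ[k] P ⊗[k] C) (X : P ⊗[k] C →ₗ[k] P) (g : C →ₗ[k] P) (x : P ⊗[k] C) :
    TensorProduct.map (X ∘ₗ δ) g x = TensorProduct.map X g (rTensor C δ x) := by
  induction x using TensorProduct.induction_on with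
  | zero => simp
  | tmul a c => simp
  | add x y hx hy => simp only [map_add, hx, hy]

lemma N4 (f g : C →ₗ[k] P) (w : P ⊗[k] (C ⊗[k] C)) :
    LinearMap.mul' k P (TensorProduct.map (LinearMap.mul' k P ∘ₗ lTensor P f) g
        ((TensorProduct.assoc k P C C).symm w))
      = LinearMap.mul' k P (lTensor P (LinearMap.mul' k P ∘ₗ TensorProduct.map f g) w) := by
  induction w using TensorProduct.induction_on with
  | zero => simp
  | tmul a y =>
      induction y using TensorProduct.induction_on with
      | zero => simp
      | tmul c c' => simp [mul_assoc]
      | add y z hy hz => simp only [tmul_add, map_add, hy, hz]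
  | add w w' hw hw' => simp only [map_add, hw, hw']

lemma key1 {δ : P →ₗ[k] P ⊗[k] C} {ψ : C ⊗[k] P →ₗ[k] P ⊗[k] C}
    (hδ2 : ∀ p : P, (rTensor C δ) (δ p)
      = (TensorProduct.assoc k P C C).symm
          ((lTensor P (Coalgebra.comul : C →ₗ[k] C ⊗[k] C)) (δ p)))
    (hent : IsEntwinedOn δ ψ) {f : C →ₗ[k] P}
    (hcolin : ψ ∘ₗ (lTensor C f) ∘ₗ (Coalgebra.comul : C →ₗ[k] C ⊗[k] C)
      = (rTensor C f) ∘ₗ (Coalgebra.comul : C →ₗ[k] C ⊗[k] C)) (g : C →ₗ[k] P) (p : P) :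
    autoOf δ g (autoOf δ f p) = autoOf δ (conv f g) p := by
  have h0 : autoOf δ f = (LinearMap.mul' k P ∘ₗ lTensor P f) ∘ₗ δ := by
    rw [autoOf, comp_assoc]
  have hcv : conv f g = (LinearMap.mul' k P ∘ₗ TensorProduct.map f g)
      ∘ₗ (Coalgebra.comul : C →ₗ[k] C ⊗[k] C) := by
    rw [conv, comp_assoc]
  calc autoOf δ g (autoOf δ f p)
      = LinearMap.mul' k P (lTensor P g (δ (autoOf δ f p))) := by simp [autoOf]
    _ = LinearMap.mul' k P (lTensor P g (rTensor C (autoOf δ f) (δ p))) := by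
        rw [Ff_colinear hδ2 hent hcolin p]
    _ = LinearMap.mul' k P (TensorProduct.map (autoOf δ f) g (δ p)) := G1 g _ _
    _ = LinearMap.mul' k P (TensorProduct.map (LinearMap.mul' k P ∘ₗ lTensor P f) g
          (rTensor C δ (δ p))) := by rw [h0, G2]
    _ = LinearMap.mul' k P (lTensor P (conv f g) (δ p)) := by
        rw [hδ2 p, N4, hcv, ← lTensor_comp_apply]
    _ = autoOf δ (conv f g) p := by simp [autoOf]

-- convolution algebra
lemma conv_apply (f g : C →ₗ[k] P) (c : C) :
    conv f g c = LinearMap.mul' k P (TensorProduct.map f g (Coalgebra.comul c)) := rfl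

lemma G2c (X : C ⊗[k] C →ₗ[k] P) (g : C →ₗ[k] P) (y : C ⊗[k] C) :
    TensorProduct.map (X ∘ₗ (Coalgebra.comul : C →ₗ[k] C ⊗[k] C)) g y
      = TensorProduct.map X g (rTensor C (Coalgebra.comul : C →ₗ[k] C ⊗[k] C) y) := by
  induction y using TensorProduct.induction_on with
  | zero => simp
  | tmul a c => simp
  | add x y hx hy => simp only [map_add, hx, hy]

lemma G2c' (X : C ⊗[k] C →ₗ[k] P) (g : C →ₗ[k] P) (y : C ⊗[k] C) :
    TensorProduct.map g (X ∘ₗ (Coalgebra.comul : C →ₗ[k] C ⊗[k] C)) y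
      = TensorProduct.map g X (lTensor C (Coalgebra.comul : C →ₗ[k] C ⊗[k] C) y) := by
  induction y using TensorProduct.induction_on with
  | zero => simp
  | tmul a c => simp
  | add x y hx hy => simp only [map_add, hx, hy]

lemma N5 (f g h : C →ₗ[k] P) (w : C ⊗[k] (C ⊗[k] C)) :
    LinearMap.mul' k P (TensorProduct.map (LinearMap.mul' k P ∘ₗ TensorProduct.map f g) h
        ((TensorProduct.assoc k C C C).symm w))
      = LinearMap.mul' k P (TensorProduct.map f (LinearMap.mul' k P ∘ₗ TensorProduct.map g h) w) := by
  induction w using TensorProduct.induction_on with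
  | zero => simp
  | tmul a y =>
      induction y using TensorProduct.induction_on with
      | zero => simp
      | tmul c c' => simp [mul_assoc]
      | add y z hy hz => simp only [tmul_add, map_add, hy, hz]
  | add w w' hw hw' => simp only [map_add, hw, hw']

lemma conv_assoc (f g h : C →ₗ[k] P) : conv (conv f g) h = conv f (conv g h) := by
  ext c
  have hfg : conv f g = (LinearMap.mul' k P ∘ₗ TensorProduct.map f g)
      ∘ₗ (Coalgebra.comul : C →ₗ[k] C ⊗[k] C) := by rw [conv, comp_assoc]
  have hgh : conv g h = (LinearMap.mul' k P ∘ₗ TensorProduct.map g h)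
      ∘ₗ (Coalgebra.comul : C →ₗ[k] C ⊗[k] C) := by rw [conv, comp_assoc]
  rw [conv_apply, conv_apply, hfg, hgh, G2c, G2c', ← Coalgebra.coassoc_symm_apply, N5]

lemma mu_map_unit_right (f : C →ₗ[k] P) (y : C ⊗[k] C) :
    LinearMap.mul' k P (TensorProduct.map f (convUnit (k := k) (P := P) (C := C)) y)
      = f (TensorProduct.rid k C (lTensor C (Coalgebra.counit : C →ₗ[k] k) y)) := by
  induction y using TensorProduct.induction_on with
  | zero => simp
  | tmul c c' =>
      simp only [map_tmul, mul'_apply, convUnit, coe_comp, Function.comp_apply,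
        Algebra.linearMap_apply, lTensor_tmul, rid_tmul, map_smul]
      rw [Algebra.algebraMap_eq_smul_one, mul_smul_comm, mul_one]
  | add x y hx hy => simp only [map_add, hx, hy]

lemma mu_map_unit_left (f : C →ₗ[k] P) (y : C ⊗[k] C) :
    LinearMap.mul' k P (TensorProduct.map (convUnit (k := k) (P := P) (C := C)) f y)
      = f (TensorProduct.lid k C (rTensor C (Coalgebra.counit : C →ₗ[k] k) y)) := by
  induction y using TensorProduct.induction_on with
  | zero => simp
  | tmul c c' =>
      simp only [map_tmul, mul'_apply, convUnit, coe_comp, Function.comp_apply,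
        Algebra.linearMap_apply, rTensor_tmul, lid_tmul, map_smul]
      rw [Algebra.algebraMap_eq_smul_one, smul_mul_assoc, one_mul]
  | add x y hx hy => simp only [map_add, hx, hy]

lemma conv_unit_right (f : C →ₗ[k] P) : conv f convUnit = f := by
  ext c
  rw [conv_apply, mu_map_unit_right]
  rw [Coalgebra.lTensor_counit_comul]
  simp

lemma conv_unit_left (f : C →ₗ[k] P) : conv convUnit f = f := by
  ext c
  rw [conv_apply, mu_map_unit_left]
  rw [Coalgebra.rTensor_counit_comul]
  simp

def hsmul (f : C →ₗ[k] P) (H : C →ₗ[k] P ⊗[k] C) : C →ₗ[k] P ⊗[k] C :=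
  rhoA ∘ₗ TensorProduct.map f H ∘ₗ (Coalgebra.comul : C →ₗ[k] C ⊗[k] C)

lemma hsmul_apply (f : C →ₗ[k] P) (H : C →ₗ[k] P ⊗[k] C) (c : C) :
    hsmul f H c = rhoA (TensorProduct.map f H (Coalgebra.comul c)) := rfl

lemma rT_algebraMap_smul (r : k) (m : P ⊗[k] C) :
    rTensor C (mulLeft k (algebraMap k P r)) m = r • m := by
  induction m using TensorProduct.induction_on with
  | zero => simp
  | tmul a c => simp [← Algebra.smul_def, TensorProduct.smul_tmul']
  | add x y hx hy => simp only [map_add, hx, hy, smul_add]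

lemma map_comp_left_apply {M N : Type*} [AddCommGroup M] [Module k M]
    [AddCommGroup N] [Module k N] (X : C ⊗[k] C →ₗ[k] M) (H : C →ₗ[k] N) (y : C ⊗[k] C) :
    TensorProduct.map (X ∘ₗ (Coalgebra.comul : C →ₗ[k] C ⊗[k] C)) H y
      = TensorProduct.map X H (rTensor C (Coalgebra.comul : C →ₗ[k] C ⊗[k] C) y) := by
  induction y using TensorProduct.induction_on with
  | zero => simp
  | tmul a c => simp
  | add x y hx hy => simp only [map_add, hx, hy]

lemma map_comp_right_apply {M N : Type*} [AddCommGroup M] [Module k M]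
    [AddCommGroup N] [Module k N] (f : C →ₗ[k] M) (X : C ⊗[k] C →ₗ[k] N) (y : C ⊗[k] C) :
    TensorProduct.map f (X ∘ₗ (Coalgebra.comul : C →ₗ[k] C ⊗[k] C)) y
      = TensorProduct.map f X (lTensor C (Coalgebra.comul : C →ₗ[k] C ⊗[k] C) y) := by
  induction y using TensorProduct.induction_on with
  | zero => simp
  | tmul a c => simp
  | add x y hx hy => simp only [map_add, hx, hy]

lemma unit_hsmul (H : C →ₗ[k] P ⊗[k] C) : hsmul convUnit H = H := by
  have sub : ∀ y : C ⊗[k] C, rhoA (TensorProduct.map (convUnit (k := k) (P := P) (C := C)) H y)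
      = H (TensorProduct.lid k C (rTensor C (Coalgebra.counit : C →ₗ[k] k) y)) := by
    intro y
    induction y using TensorProduct.induction_on with
    | zero => simp
    | tmul c c' =>
        simp only [map_tmul, rhoA_tmul, convUnit, coe_comp, Function.comp_apply,
          Algebra.linearMap_apply, rT_algebraMap_smul, rTensor_tmul, lid_tmul, map_smul]
    | add x y hx hy => simp only [map_add, hx, hy]
  ext c
  rw [hsmul_apply, sub, Coalgebra.rTensor_counit_comul]
  simp

lemma N6 (a b : C →ₗ[k] P) (H : C →ₗ[k] P ⊗[k] C) (w : C ⊗[k] (C ⊗[k] C)) :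
    rhoA (TensorProduct.map (LinearMap.mul' k P ∘ₗ TensorProduct.map a b) H
        ((TensorProduct.assoc k C C C).symm w))
      = rhoA (TensorProduct.map a (rhoA ∘ₗ TensorProduct.map b H) w) := by
  induction w using TensorProduct.induction_on with
  | zero => simp
  | tmul x y =>
      induction y using TensorProduct.induction_on with
      | zero => simp
      | tmul c c' => simp [rhoA_tmul, rT_mulLeft_mul, rTensor_comp_apply]
      | add y z hy hz => simp only [tmul_add, map_add, hy, hz]
  | add w w' hw hw' => simp only [map_add, hw, hw']

lemma hsmul_conv (a b : C →ₗ[k] P) (H : C →ₗ[k] P ⊗[k] C) :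
    hsmul (conv a b) H = hsmul a (hsmul b H) := by
  ext c
  have hcv : conv a b = (LinearMap.mul' k P ∘ₗ TensorProduct.map a b)
      ∘ₗ (Coalgebra.comul : C →ₗ[k] C ⊗[k] C) := by rw [conv, comp_assoc]
  have hsb : hsmul b H = (rhoA ∘ₗ TensorProduct.map b H)
      ∘ₗ (Coalgebra.comul : C →ₗ[k] C ⊗[k] C) := by rw [hsmul, comp_assoc]
  rw [hsmul_apply, hsmul_apply, hcv, hsb, map_comp_left_apply, map_comp_right_apply,
    ← Coalgebra.coassoc_symm_apply, N6]

lemma hsmul_mk (g : C →ₗ[k] P) :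
    hsmul g (TensorProduct.mk k P C 1)
      = rTensor C g ∘ₗ (Coalgebra.comul : C →ₗ[k] C ⊗[k] C) := by
  have sub : ∀ y : C ⊗[k] C, rhoA (TensorProduct.map g (TensorProduct.mk k P C 1) y)
      = rTensor C g y := by
    intro y
    induction y using TensorProduct.induction_on with
    | zero => simp
    | tmul c c' => simp [rhoA_tmul]
    | add x y hx hy => simp only [map_add, hx, hy]
  ext c
  rw [hsmul_apply, sub]
  rfl

lemma psi_unit {ψ : C ⊗[k] P →ₗ[k] P ⊗[k] C}
    (hψ2 : ∀ c : C, ψ (c ⊗ₜ[k] (1:P)) = (1:P) ⊗ₜ[k] c) (y : C ⊗[k] C) :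
    ψ (lTensor C (convUnit (k := k) (P := P) (C := C)) y)
      = TensorProduct.mk k P C 1 (TensorProduct.rid k C
          (lTensor C (Coalgebra.counit : C →ₗ[k] k) y)) := by
  induction y using TensorProduct.induction_on with
  | zero => simp
  | tmul c c' =>
      simp only [lTensor_tmul, convUnit, coe_comp, Function.comp_apply,
        Algebra.linearMap_apply, rid_tmul, map_smul, TensorProduct.mk_apply,
        Algebra.algebraMap_eq_smul_one, tmul_smul]
      rw [hψ2 c]
  | add x y hx hy => simp only [map_add, hx, hy]

lemma rT_unit (y : C ⊗[k] C) :
    rTensor C (convUnit (k := k) (P := P) (C := C)) y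
      = TensorProduct.mk k P C 1 (TensorProduct.lid k C
          (rTensor C (Coalgebra.counit : C →ₗ[k] k) y)) := by
  induction y using TensorProduct.induction_on with
  | zero => simp
  | tmul c c' =>
      simp only [rTensor_tmul, convUnit, coe_comp, Function.comp_apply,
        Algebra.linearMap_apply, lid_tmul, map_smul, TensorProduct.mk_apply,
        Algebra.algebraMap_eq_smul_one, TensorProduct.smul_tmul, tmul_smul]
  | add x y hx hy => simp only [map_add, hx, hy]

lemma unit_colinear {ψ : C ⊗[k] P →ₗ[k] P ⊗[k] C}
    (hψ2 : ∀ c : C, ψ (c ⊗ₜ[k] (1:P)) = (1:P) ⊗ₜ[k] c) :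
    ψ ∘ₗ (lTensor C (convUnit (k := k) (P := P) (C := C)))
        ∘ₗ (Coalgebra.comul : C →ₗ[k] C ⊗[k] C)
      = (rTensor C (convUnit (k := k) (P := P) (C := C)))
        ∘ₗ (Coalgebra.comul : C →ₗ[k] C ⊗[k] C) := by
  ext c
  simp only [coe_comp, Function.comp_apply]
  rw [psi_unit hψ2, rT_unit, Coalgebra.rTensor_counit_comul, Coalgebra.lTensor_counit_comul]
  simp

lemma M1 {ψ : C ⊗[k] P →ₗ[k] P ⊗[k] C} (f h : C →ₗ[k] P) (w : C ⊗[k] (C ⊗[k] C)) :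
    rTensor C (LinearMap.mul' k P) ((TensorProduct.assoc k P P C).symm
      (lTensor P ψ ((TensorProduct.assoc k P C P)
        (rTensor P ψ ((TensorProduct.assoc k C P P).symm
          (lTensor C (TensorProduct.map f h) w))))))
    = PhiPsi ψ (rTensor P (ψ ∘ₗ lTensor C f) ((TensorProduct.assoc k C C P).symm
        (lTensor C (lTensor C h) w))) := by
  induction w using TensorProduct.induction_on with
  | zero => simp
  | tmul x y =>
      induction y using TensorProduct.induction_on with
      | zero => simp
      | tmul c c' => simp [PhiPsi, rhoA]
      | add y z hy hz => simp only [tmul_add, map_add, hy, hz]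
  | add w w' hw hw' => simp only [map_add, hw, hw']

lemma s4nat (h : C →ₗ[k] P) (v : C ⊗[k] (C ⊗[k] C)) :
    (TensorProduct.assoc k C C P).symm (lTensor C (lTensor C h) v)
      = lTensor (C ⊗[k] C) h ((TensorProduct.assoc k C C C).symm v) := by
  induction v using TensorProduct.induction_on with
  | zero => simp
  | tmul x y =>
      induction y using TensorProduct.induction_on with
      | zero => simp
      | tmul c c' => simp
      | add y z hy hz => simp only [tmul_add, map_add, hy, hz]
  | add v v' hv hv' => simp only [map_add, hv, hv']

lemma s6nat {ψ : C ⊗[k] P →ₗ[k] P ⊗[k] C} (f h : C →ₗ[k] P) (y : C ⊗[k] C) :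
    rTensor P (ψ ∘ₗ lTensor C f) (lTensor (C ⊗[k] C) h
        (rTensor C (Coalgebra.comul : C →ₗ[k] C ⊗[k] C) y))
      = rTensor P (ψ ∘ₗ lTensor C f ∘ₗ (Coalgebra.comul : C →ₗ[k] C ⊗[k] C))
          (lTensor C h y) := by
  induction y using TensorProduct.induction_on with
  | zero => simp
  | tmul c c' => simp
  | add x y hx hy => simp only [map_add, hx, hy]

lemma s8nat (h : C →ₗ[k] P) (y : C ⊗[k] C) :
    rTensor P (Coalgebra.comul : C →ₗ[k] C ⊗[k] C) (lTensor C h y)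
      = lTensor (C ⊗[k] C) h (rTensor C (Coalgebra.comul : C →ₗ[k] C ⊗[k] C) y) := by
  induction y using TensorProduct.induction_on with
  | zero => simp
  | tmul c c' => simp
  | add x y hx hy => simp only [map_add, hx, hy]

lemma s9 {ψ : C ⊗[k] P →ₗ[k] P ⊗[k] C} (f h : C →ₗ[k] P) (w : C ⊗[k] (C ⊗[k] C)) :
    PhiPsi ψ (rTensor P (rTensor C f) (lTensor (C ⊗[k] C) h
        ((TensorProduct.assoc k C C C).symm w)))
      = rhoA (TensorProduct.map f (ψ ∘ₗ lTensor C h) w) := by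
  induction w using TensorProduct.induction_on with
  | zero => simp
  | tmul x y =>
      induction y using TensorProduct.induction_on with
      | zero => simp
      | tmul c c' => simp [PhiPsi, rhoA_tmul]
      | add y z hy hz => simp only [tmul_add, map_add, hy, hz]
  | add w w' hw hw' => simp only [map_add, hw, hw']

lemma Mlem {ψ : C ⊗[k] P →ₗ[k] P ⊗[k] C}
    (hψ1 : ψ ∘ₗ (lTensor C (LinearMap.mul' k P))
     = (rTensor C (LinearMap.mul' k P))
        ∘ₗ (TensorProduct.assoc k P P C).symm.toLinearMap
        ∘ₗ (lTensor P ψ)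
        ∘ₗ (TensorProduct.assoc k P C P).toLinearMap
        ∘ₗ (rTensor P ψ)
        ∘ₗ (TensorProduct.assoc k C P P).symm.toLinearMap)
    {f : C →ₗ[k] P}
    (hcolin : ψ ∘ₗ (lTensor C f) ∘ₗ (Coalgebra.comul : C →ₗ[k] C ⊗[k] C)
      = (rTensor C f) ∘ₗ (Coalgebra.comul : C →ₗ[k] C ⊗[k] C))
    (h : C →ₗ[k] P) :
    ψ ∘ₗ (lTensor C (conv f h)) ∘ₗ (Coalgebra.comul : C →ₗ[k] C ⊗[k] C)
      = hsmul f (ψ ∘ₗ lTensor C h ∘ₗ (Coalgebra.comul : C →ₗ[k] C ⊗[k] C)) := by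
  ext c
  have hcv : conv f h = (LinearMap.mul' k P ∘ₗ TensorProduct.map f h)
      ∘ₗ (Coalgebra.comul : C →ₗ[k] C ⊗[k] C) := by rw [conv, comp_assoc]
  have step2 := LinearMap.congr_fun hψ1
    (lTensor C (TensorProduct.map f h)
      (lTensor C (Coalgebra.comul : C →ₗ[k] C ⊗[k] C) (Coalgebra.comul c)))
  simp only [coe_comp, Function.comp_apply, LinearEquiv.coe_coe] at step2 ⊢
  rw [hcv, lTensor_comp_apply, lTensor_comp_apply, step2, M1, s4nat,
    Coalgebra.coassoc_symm_apply, s6nat, hcolin]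
  rw [rTensor_comp_apply, s8nat, ← Coalgebra.coassoc_symm_apply, s9]
  have hr : hsmul f (ψ ∘ₗ lTensor C h ∘ₗ (Coalgebra.comul : C →ₗ[k] C ⊗[k] C)) c
      = rhoA (TensorProduct.map f (ψ ∘ₗ lTensor C h)
          (lTensor C (Coalgebra.comul : C →ₗ[k] C ⊗[k] C) (Coalgebra.comul c))) := by
    rw [hsmul_apply, ← comp_assoc, map_comp_right_apply]
  rw [hr]

lemma colinear_of_convInv {ψ : C ⊗[k] P →ₗ[k] P ⊗[k] C}
    (hψ1 : ψ ∘ₗ (lTensor C (LinearMap.mul' k P))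
     = (rTensor C (LinearMap.mul' k P))
        ∘ₗ (TensorProduct.assoc k P P C).symm.toLinearMap
        ∘ₗ (lTensor P ψ)
        ∘ₗ (TensorProduct.assoc k P C P).toLinearMap
        ∘ₗ (rTensor P ψ)
        ∘ₗ (TensorProduct.assoc k C P P).symm.toLinearMap)
    (hψ2 : ∀ c : C, ψ (c ⊗ₜ[k] (1:P)) = (1:P) ⊗ₜ[k] c)
    {f g : C →ₗ[k] P}
    (hcolin : ψ ∘ₗ (lTensor C f) ∘ₗ (Coalgebra.comul : C →ₗ[k] C ⊗[k] C)
      = (rTensor C f) ∘ₗ (Coalgebra.comul : C →ₗ[k] C ⊗[k] C))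
    (hfg : conv f g = convUnit) (hgf : conv g f = convUnit) :
    ψ ∘ₗ (lTensor C g) ∘ₗ (Coalgebra.comul : C →ₗ[k] C ⊗[k] C)
      = (rTensor C g) ∘ₗ (Coalgebra.comul : C →ₗ[k] C ⊗[k] C) := by
  set β := ψ ∘ₗ (lTensor C g) ∘ₗ (Coalgebra.comul : C →ₗ[k] C ⊗[k] C) with hβ
  have e1 : β = hsmul (conv g f) β := by rw [hgf, unit_hsmul]
  have e2 : hsmul (conv g f) β = hsmul g (hsmul f β) := hsmul_conv g f β
  have e3 : hsmul f β = ψ ∘ₗ (lTensor C (conv f g))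
      ∘ₗ (Coalgebra.comul : C →ₗ[k] C ⊗[k] C) := (Mlem hψ1 hcolin g).symm
  have e4 : ψ ∘ₗ (lTensor C (conv f g)) ∘ₗ (Coalgebra.comul : C →ₗ[k] C ⊗[k] C)
      = rTensor C (convUnit (k := k) (P := P) (C := C))
          ∘ₗ (Coalgebra.comul : C →ₗ[k] C ⊗[k] C) := by
    rw [hfg]; exact unit_colinear hψ2
  have e5 : rTensor C (convUnit (k := k) (P := P) (C := C))
      ∘ₗ (Coalgebra.comul : C →ₗ[k] C ⊗[k] C) = hsmul g (TensorProduct.mk k P C 1) →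
      True := fun _ => trivial
  have e6 : hsmul g (rTensor C (convUnit (k := k) (P := P) (C := C))
      ∘ₗ (Coalgebra.comul : C →ₗ[k] C ⊗[k] C)) = rTensor C g
      ∘ₗ (Coalgebra.comul : C →ₗ[k] C ⊗[k] C) := by
    have : rTensor C (convUnit (k := k) (P := P) (C := C))
        ∘ₗ (Coalgebra.comul : C →ₗ[k] C ⊗[k] C) = TensorProduct.mk k P C 1 := by
      ext c
      rw [coe_comp, Function.comp_apply, rT_unit, Coalgebra.rTensor_counit_comul]
      simp
    rw [this, hsmul_mk]
  rw [e1, e2, e3, e4, e6]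

lemma autoOf_apply (δ : P →ₗ[k] P ⊗[k] C) (f : C →ₗ[k] P) (p : P) :
    autoOf δ f p = LinearMap.mul' k P (lTensor P f (δ p)) := rfl

lemma transformOf_apply (t : C →ₗ[k] P ⊗[k] P) (F : P →ₗ[k] P) (c : C) :
    transformOf t F c = LinearMap.mul' k P (lTensor P F (t c)) := rfl

lemma Funit (x : P ⊗[k] C) :
    LinearMap.mul' k P (lTensor P (convUnit (k := k) (P := P) (C := C)) x)
      = TensorProduct.rid k P (lTensor P (Coalgebra.counit : C →ₗ[k] k) x) := by
  induction x using TensorProduct.induction_on with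
  | zero => simp
  | tmul a c => simp [convUnit, Algebra.algebraMap_eq_smul_one, mul_smul_comm]
  | add x y hx hy => simp only [map_add, hx, hy]

lemma Funit_id {δ : P →ₗ[k] P ⊗[k] C}
    (hδ1 : ∀ p : P, (TensorProduct.rid k P)
      ((lTensor P (Coalgebra.counit : C →ₗ[k] k)) (δ p)) = p) (p : P) :
    autoOf δ convUnit p = p := by
  rw [autoOf_apply, Funit, hδ1 p]

lemma autoOf_Blinear (δ : P →ₗ[k] P ⊗[k] C) (f : C →ₗ[k] P) :
    ∀ b ∈ coinv δ, ∀ p : P, autoOf δ f (b * p) = b * autoOf δ f p := by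
  intro b hb p
  rw [autoOf_apply, autoOf_apply, hb p, smul_eq_rT, mu_lT_rT]

lemma rT_injective {F : P →ₗ[k] P} (hF : Function.Bijective F) :
    Function.Injective (rTensor C F) := by
  set e := LinearEquiv.ofBijective F hF with he
  have hco : ∀ z : P ⊗[k] C, (TensorProduct.congr e (LinearEquiv.refl k C)) z
      = rTensor C F z := by
    intro z
    induction z using TensorProduct.induction_on with
    | zero => simp
    | tmul a c => simp [TensorProduct.congr_tmul, he, LinearEquiv.ofBijective_apply]
    | add x y hx hy => simp only [map_add, hx, hy]
  intro x y hxy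
  have := (TensorProduct.congr e (LinearEquiv.refl k C)).injective (a₁ := x) (a₂ := y)
  rw [hco, hco] at this
  exact this hxy

lemma inv_gauge {δ : P →ₗ[k] P ⊗[k] C} {F : P →ₗ[k] P} (hF : IsGaugeAuto δ F) :
    ∃ F' : P →ₗ[k] P, IsGaugeAuto δ F' ∧ (∀ p, F (F' p) = p) ∧ (∀ p, F' (F p) = p) := by
  set e := LinearEquiv.ofBijective F hF.1 with he
  refine ⟨e.symm.toLinearMap, ?_, fun p => e.apply_symm_apply p, fun p => e.symm_apply_apply p⟩
  have h1 : ∀ p, F (e.symm p) = p := fun p => e.apply_symm_apply p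
  have h2 : ∀ p, e.symm (F p) = p := fun p => e.symm_apply_apply p
  refine ⟨e.symm.bijective, ?_, ?_, ?_⟩
  · conv_lhs => rw [← hF.2.1]
    exact h2 1
  · intro b hb p
    apply hF.1.1
    simp only [LinearEquiv.coe_coe]
    rw [h1, hF.2.2.1 b hb, h1]
  · intro p
    apply rT_injective hF.1
    have hc : F ∘ₗ e.symm.toLinearMap = LinearMap.id := by
      ext q; simpa using h1 q
    simp only [LinearEquiv.coe_coe]
    rw [← hF.2.2.2 (e.symm p), h1, ← rTensor_comp_apply, hc]
    simp

lemma comp_gauge {δ : P →ₗ[k] P ⊗[k] C} {F G : P →ₗ[k] P}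
    (hF : IsGaugeAuto δ F) (hG : IsGaugeAuto δ G) : IsGaugeAuto δ (G ∘ₗ F) := by
  refine ⟨hG.1.comp hF.1, ?_, ?_, ?_⟩
  · simp [hF.2.1, hG.2.1]
  · intro b hb p
    simp [hF.2.2.1 b hb p, hG.2.2.1 b hb (F p)]
  · intro p
    simp only [coe_comp, Function.comp_apply]
    rw [hG.2.2.2 (F p), hF.2.2.2 p, ← rTensor_comp_apply]

def trAct (δ : P →ₗ[k] P ⊗[k] C) (t : C →ₗ[k] P ⊗[k] P) : P ⊗[k] C →ₗ[k] P ⊗[k] P :=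
  rTensor P (LinearMap.mul' k P) ∘ₗ (TensorProduct.assoc k P P P).symm.toLinearMap
    ∘ₗ lTensor P t

lemma rT3_mulLeft (a : P) (w : P ⊗[k] P) :
    rTensor P (LinearMap.mul' k P) ((TensorProduct.assoc k P P P).symm (a ⊗ₜ w))
      = rTensor P (mulLeft k a) w := by
  induction w using TensorProduct.induction_on with
  | zero => simp
  | tmul u v => simp
  | add x y hx hy => simp only [tmul_add, map_add, hx, hy]

lemma trAct_tmul (δ : P →ₗ[k] P ⊗[k] C) (t : C →ₗ[k] P ⊗[k] P) (a : P) (c : C) :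
    trAct δ t (a ⊗ₜ c) = rTensor P (mulLeft k a) (t c) := by
  simp only [trAct, coe_comp, Function.comp_apply, LinearEquiv.coe_coe, lTensor_tmul]
  exact rT3_mulLeft a (t c)

lemma rTP_mulLeft_mul (a b : P) (x : P ⊗[k] P) : rTensor P (mulLeft k (a*b)) x
    = rTensor P (mulLeft k a) (rTensor P (mulLeft k b) x) := by
  rw [LinearMap.mulLeft_mul, ← rTensor_comp_apply]

lemma canLift_mulLeft (δ : P →ₗ[k] P ⊗[k] C) (a : P) (w : P ⊗[k] P) :
    canLift δ (rTensor P (mulLeft k a) w) = rTensor C (mulLeft k a) (canLift δ w) := by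
  induction w using TensorProduct.induction_on with
  | zero => simp
  | tmul u v => rw [rTensor_tmul, canLift_tmul, canLift_tmul, mulLeft_apply, rT_mulLeft_mul]
  | add x y hx hy => simp only [map_add, hx, hy]

lemma canLift_trAct {δ : P →ₗ[k] P ⊗[k] C} {t : C →ₗ[k] P ⊗[k] P}
    (ht : ∀ c : C, canLift δ (t c) = (1 : P) ⊗ₜ[k] c) (x : P ⊗[k] C) :
    canLift δ (trAct δ t x) = x := by
  induction x using TensorProduct.induction_on with
  | zero => simp
  | tmul a c =>
      rw [trAct_tmul, canLift_mulLeft, ht c]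
      simp
  | add x y hx hy => simp only [map_add, hx, hy]

lemma galRel_sub {δ : P →ₗ[k] P ⊗[k] C} {t : C →ₗ[k] P ⊗[k] P}
    (hker : LinearMap.ker (canLift δ) = galRel δ)
    (ht : ∀ c : C, canLift δ (t c) = (1 : P) ⊗ₜ[k] c) (p : P) :
    trAct δ t (δ p) - (1:P) ⊗ₜ[k] p ∈ galRel δ := by
  rw [← hker, LinearMap.mem_ker, map_sub, canLift_trAct ht, canLift_tmul, rT_mulLeft_one,
    sub_self]

lemma mu_lT_mulLeftP (F : P →ₗ[k] P) (a : P) (w : P ⊗[k] P) :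
    LinearMap.mul' k P (lTensor P F (rTensor P (mulLeft k a) w))
      = a * LinearMap.mul' k P (lTensor P F w) := by
  induction w using TensorProduct.induction_on with
  | zero => simp
  | tmul u v => simp [mul_assoc]
  | add x y hx hy => simp only [map_add, hx, hy, mul_add]

lemma mF_kill {δ : P →ₗ[k] P ⊗[k] C} {F : P →ₗ[k] P}
    (hB : ∀ b ∈ coinv δ, ∀ p : P, F (b * p) = b * F p) :
    ∀ x ∈ galRel δ, LinearMap.mul' k P (lTensor P F x) = 0 := by
  intro x hx
  induction hx using Submodule.span_induction with
  | mem y hy =>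
      obtain ⟨p, b, p', hb, rfl⟩ := hy
      simp only [map_sub, lTensor_tmul, mul'_apply]
      rw [hB b hb p', ← mul_assoc, sub_self]
  | zero => simp
  | add x y _ _ hx hy => simp only [map_add, hx, hy, add_zero]
  | smul r x _ hx => simp only [map_smul, hx, smul_zero]

lemma mF_trAct (δ : P →ₗ[k] P ⊗[k] C) (t : C →ₗ[k] P ⊗[k] P) (F : P →ₗ[k] P)
    (x : P ⊗[k] C) :
    LinearMap.mul' k P (lTensor P (transformOf t F) x)
      = LinearMap.mul' k P (lTensor P F (trAct δ t x)) := by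
  induction x using TensorProduct.induction_on with
  | zero => simp
  | tmul a c => rw [lTensor_tmul, mul'_apply, transformOf_apply, trAct_tmul, mu_lT_mulLeftP]
  | add x y hx hy => simp only [map_add, hx, hy]

lemma autoOf_transformOf {δ : P →ₗ[k] P ⊗[k] C} {t : C →ₗ[k] P ⊗[k] P} {F : P →ₗ[k] P}
    (hker : LinearMap.ker (canLift δ) = galRel δ)
    (ht : ∀ c : C, canLift δ (t c) = (1 : P) ⊗ₜ[k] c)
    (hB : ∀ b ∈ coinv δ, ∀ p : P, F (b * p) = b * F p) (p : P) :
    autoOf δ (transformOf t F) p = F p := by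
  rw [autoOf_apply, mF_trAct δ]
  have hd := galRel_sub hker ht p
  have hsplit : trAct δ t (δ p) = ((1:P) ⊗ₜ[k] p) + (trAct δ t (δ p) - (1:P) ⊗ₜ[k] p) := by
    abel
  rw [hsplit, map_add, map_add, mF_kill hB _ hd, add_zero]
  simp

lemma mu_lT_autoOf (δ : P →ₗ[k] P ⊗[k] C) (f : C →ₗ[k] P) (w : P ⊗[k] P) :
    LinearMap.mul' k P (lTensor P (autoOf δ f) w)
      = LinearMap.mul' k P (lTensor P f (canLift δ w)) := by
  induction w using TensorProduct.induction_on with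
  | zero => simp
  | tmul u v =>
      rw [lTensor_tmul, mul'_apply, autoOf_apply, canLift_tmul, mu_lT_rT]
  | add x y hx hy => simp only [map_add, hx, hy]

lemma transformOf_autoOf {δ : P →ₗ[k] P ⊗[k] C} {t : C →ₗ[k] P ⊗[k] P}
    (ht : ∀ c : C, canLift δ (t c) = (1 : P) ⊗ₜ[k] c) (f : C →ₗ[k] P) :
    transformOf t (autoOf δ f) = f := by
  ext c
  rw [transformOf_apply, mu_lT_autoOf, ht c]
  simp

lemma mu_eq_counit {δ : P →ₗ[k] P ⊗[k] C}
    (hδ1 : ∀ p : P, (TensorProduct.rid k P)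
      ((lTensor P (Coalgebra.counit : C →ₗ[k] k)) (δ p)) = p) (w : P ⊗[k] P) :
    LinearMap.mul' k P w
      = TensorProduct.rid k P (lTensor P (Coalgebra.counit : C →ₗ[k] k) (canLift δ w)) := by
  have sub : ∀ (u : P) (x : P ⊗[k] C),
      TensorProduct.rid k P (lTensor P (Coalgebra.counit : C →ₗ[k] k)
        (rTensor C (mulLeft k u) x))
      = u * TensorProduct.rid k P (lTensor P (Coalgebra.counit : C →ₗ[k] k) x) := by
    intro u x
    induction x using TensorProduct.induction_on with
    | zero => simp
    | tmul a c => simp [mul_smul_comm]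
    | add x y hx hy => simp only [map_add, hx, hy, mul_add]
  induction w using TensorProduct.induction_on with
  | zero => simp
  | tmul u v => rw [canLift_tmul, sub, hδ1 v, mul'_apply]
  | add x y hx hy => simp only [map_add, hx, hy]

lemma transformOf_id {δ : P →ₗ[k] P ⊗[k] C} {t : C →ₗ[k] P ⊗[k] P}
    (hδ1 : ∀ p : P, (TensorProduct.rid k P)
      ((lTensor P (Coalgebra.counit : C →ₗ[k] k)) (δ p)) = p)
    (ht : ∀ c : C, canLift δ (t c) = (1 : P) ⊗ₜ[k] c) :
    transformOf t (LinearMap.id (M := P)) = convUnit := by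
  ext c
  rw [transformOf_apply, lTensor_id]
  simp only [id_coe, id_eq]
  rw [mu_eq_counit hδ1, ht c]
  simp [convUnit, Algebra.algebraMap_eq_smul_one]

lemma K_mulLeft (h : C →ₗ[k] P ⊗[k] C) (u : P) (x : P ⊗[k] C) :
    rhoA (lTensor P h (rTensor C (mulLeft k u) x))
      = rTensor C (mulLeft k u) (rhoA (lTensor P h x)) := by
  induction x using TensorProduct.induction_on with
  | zero => simp
  | tmul a c => simp [rhoA_tmul, rT_mulLeft_mul, rTensor_comp_apply]
  | add x y hx hy => simp only [map_add, hx, hy]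

lemma GLa (δ : P →ₗ[k] P ⊗[k] C) (h : C →ₗ[k] P ⊗[k] C) (w : P ⊗[k] P) :
    rhoA (lTensor P (rhoA ∘ₗ lTensor P h ∘ₗ δ) w)
      = rhoA (lTensor P h (canLift δ w)) := by
  induction w using TensorProduct.induction_on with
  | zero => simp
  | tmul u v =>
      rw [lTensor_tmul, rhoA_tmul, canLift_tmul, K_mulLeft]
      simp only [coe_comp, Function.comp_apply]
  | add x y hx hy => simp only [map_add, hx, hy]

lemma one_act (h : C →ₗ[k] P ⊗[k] C) (c : C) :
    rhoA (lTensor P h ((1:P) ⊗ₜ[k] c)) = h c := by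
  rw [lTensor_tmul, rhoA_tmul, rT_mulLeft_one]

lemma trans_colinear {δ : P →ₗ[k] P ⊗[k] C} {ψ : C ⊗[k] P →ₗ[k] P ⊗[k] C}
    {t : C →ₗ[k] P ⊗[k] P} {F : P →ₗ[k] P}
    (hδ2 : ∀ p : P, (rTensor C δ) (δ p)
      = (TensorProduct.assoc k P C C).symm
          ((lTensor P (Coalgebra.comul : C →ₗ[k] C ⊗[k] C)) (δ p)))
    (hent : IsEntwinedOn δ ψ)
    (hker : LinearMap.ker (canLift δ) = galRel δ)
    (ht : ∀ c : C, canLift δ (t c) = (1 : P) ⊗ₜ[k] c)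
    (hF : IsGaugeAuto δ F) :
    ψ ∘ₗ (lTensor C (transformOf t F)) ∘ₗ (Coalgebra.comul : C →ₗ[k] C ⊗[k] C)
      = (rTensor C (transformOf t F)) ∘ₗ (Coalgebra.comul : C →ₗ[k] C ⊗[k] C) := by
  set f := transformOf t F with hfdef
  have hFfm : autoOf δ f = F := LinearMap.ext (autoOf_transformOf hker ht hF.2.2.1)
  have star : ∀ v : P,
      rhoA (lTensor P (ψ ∘ₗ lTensor C f ∘ₗ (Coalgebra.comul : C →ₗ[k] C ⊗[k] C)) (δ v))
        = rhoA (lTensor P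
            ((rTensor C f) ∘ₗ (Coalgebra.comul : C →ₗ[k] C ⊗[k] C)) (δ v)) := by
    intro v
    rw [← half1 hδ2 hent f v, ← half2 hδ2 f v, hFfm]
    exact hF.2.2.2 v
  have starm : rhoA ∘ₗ lTensor P (ψ ∘ₗ lTensor C f
        ∘ₗ (Coalgebra.comul : C →ₗ[k] C ⊗[k] C)) ∘ₗ δ
      = rhoA ∘ₗ lTensor P ((rTensor C f)
        ∘ₗ (Coalgebra.comul : C →ₗ[k] C ⊗[k] C)) ∘ₗ δ := by
    ext v
    simpa using star v
  ext c
  simp only [coe_comp, Function.comp_apply]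
  calc ψ (lTensor C f (Coalgebra.comul c))
      = rhoA (lTensor P (ψ ∘ₗ lTensor C f
          ∘ₗ (Coalgebra.comul : C →ₗ[k] C ⊗[k] C)) ((1:P) ⊗ₜ[k] c)) := by
        rw [one_act]; simp only [coe_comp, Function.comp_apply]
    _ = rhoA (lTensor P (ψ ∘ₗ lTensor C f
          ∘ₗ (Coalgebra.comul : C →ₗ[k] C ⊗[k] C)) (canLift δ (t c))) := by rw [ht c]
    _ = rhoA (lTensor P (rhoA ∘ₗ lTensor P (ψ ∘ₗ lTensor C f
          ∘ₗ (Coalgebra.comul : C →ₗ[k] C ⊗[k] C)) ∘ₗ δ) (t c)) := (GLa δ _ (t c)).symm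
    _ = rhoA (lTensor P (rhoA ∘ₗ lTensor P ((rTensor C f)
          ∘ₗ (Coalgebra.comul : C →ₗ[k] C ⊗[k] C)) ∘ₗ δ) (t c)) := by rw [starm]
    _ = rhoA (lTensor P ((rTensor C f)
          ∘ₗ (Coalgebra.comul : C →ₗ[k] C ⊗[k] C)) (canLift δ (t c))) := GLa δ _ (t c)
    _ = rhoA (lTensor P ((rTensor C f)
          ∘ₗ (Coalgebra.comul : C →ₗ[k] C ⊗[k] C)) ((1:P) ⊗ₜ[k] c)) := by rw [ht c]
    _ = rTensor C f (Coalgebra.comul c) := by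
        rw [one_act]; simp only [coe_comp, Function.comp_apply]

lemma GT_to_gauge {δ : P →ₗ[k] P ⊗[k] C} {ψ : C ⊗[k] P →ₗ[k] P ⊗[k] C}
    (hδ1 : ∀ p : P, (TensorProduct.rid k P)
      ((lTensor P (Coalgebra.counit : C →ₗ[k] k)) (δ p)) = p)
    (hδ2 : ∀ p : P, (rTensor C δ) (δ p)
      = (TensorProduct.assoc k P C C).symm
          ((lTensor P (Coalgebra.comul : C →ₗ[k] C ⊗[k] C)) (δ p)))
    (hψ1 : ψ ∘ₗ (lTensor C (LinearMap.mul' k P))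
     = (rTensor C (LinearMap.mul' k P))
        ∘ₗ (TensorProduct.assoc k P P C).symm.toLinearMap
        ∘ₗ (lTensor P ψ)
        ∘ₗ (TensorProduct.assoc k P C P).toLinearMap
        ∘ₗ (rTensor P ψ)
        ∘ₗ (TensorProduct.assoc k C P P).symm.toLinearMap)
    (hψ2 : ∀ c : C, ψ (c ⊗ₜ[k] (1:P)) = (1:P) ⊗ₜ[k] c)
    (hent : IsEntwinedOn δ ψ) {f : C →ₗ[k] P}
    (hf : IsGaugeTransform δ ψ f) : IsGaugeAuto δ (autoOf δ f) := by
  obtain ⟨⟨g, hfg, hgf⟩, hnorm, hcolin⟩ := hf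
  have hcoling := colinear_of_convInv hψ1 hψ2 hcolin hfg hgf
  refine ⟨?_, ?_, autoOf_Blinear δ f, Ff_colinear hδ2 hent hcolin⟩
  · apply Function.bijective_iff_has_inverse.mpr
    refine ⟨autoOf δ g, fun p => ?_, fun p => ?_⟩
    · rw [key1 hδ2 hent hcolin g p, hfg]; exact Funit_id hδ1 p
    · rw [key1 hδ2 hent hcoling f p, hgf]; exact Funit_id hδ1 p
  · rw [autoOf_apply]; exact hnorm

lemma gauge_to_GT {δ : P →ₗ[k] P ⊗[k] C} {ψ : C ⊗[k] P →ₗ[k] P ⊗[k] C}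
    {t : C →ₗ[k] P ⊗[k] P} {F : P →ₗ[k] P}
    (hδ1 : ∀ p : P, (TensorProduct.rid k P)
      ((lTensor P (Coalgebra.counit : C →ₗ[k] k)) (δ p)) = p)
    (hδ2 : ∀ p : P, (rTensor C δ) (δ p)
      = (TensorProduct.assoc k P C C).symm
          ((lTensor P (Coalgebra.comul : C →ₗ[k] C ⊗[k] C)) (δ p)))
    (hent : IsEntwinedOn δ ψ)
    (hker : LinearMap.ker (canLift δ) = galRel δ)
    (ht : ∀ c : C, canLift δ (t c) = (1 : P) ⊗ₜ[k] c)
    (hF : IsGaugeAuto δ F) : IsGaugeTransform δ ψ (transformOf t F) := by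
  have hcolinf := trans_colinear hδ2 hent hker ht hF
  obtain ⟨F', hF', hFF', hF'F⟩ := inv_gauge hF
  have hcoling := trans_colinear hδ2 hent hker ht hF'
  have hivF : ∀ p, autoOf δ (transformOf t F) p = F p :=
    autoOf_transformOf hker ht hF.2.2.1
  have hivF' : ∀ p, autoOf δ (transformOf t F') p = F' p :=
    autoOf_transformOf hker ht hF'.2.2.1
  refine ⟨⟨transformOf t F', ?_, ?_⟩, ?_, hcolinf⟩
  · have hid : autoOf δ (conv (transformOf t F) (transformOf t F')) = LinearMap.id := by
      ext p
      rw [← key1 hδ2 hent hcolinf (transformOf t F') p, hivF p, hivF' (F p)]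
      exact hF'F p
    calc conv (transformOf t F) (transformOf t F')
        = transformOf t (autoOf δ (conv (transformOf t F) (transformOf t F'))) :=
          (transformOf_autoOf ht _).symm
      _ = transformOf t LinearMap.id := by rw [hid]
      _ = convUnit := transformOf_id hδ1 ht
  · have hid : autoOf δ (conv (transformOf t F') (transformOf t F)) = LinearMap.id := by
      ext p
      rw [← key1 hδ2 hent hcoling (transformOf t F) p, hivF' p, hivF (F' p)]
      exact hFF' p
    calc conv (transformOf t F') (transformOf t F)
        = transformOf t (autoOf δ (conv (transformOf t F') (transformOf t F))) :=
          (transformOf_autoOf ht _).symm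
      _ = transformOf t LinearMap.id := by rw [hid]
      _ = convUnit := transformOf_id hδ1 ht
  · have h1 := hivF 1
    rw [autoOf_apply] at h1
    rw [h1]
    exact hF.2.1

theorem gauge_transformations_group_iso_gauge_automorphisms
    (δ : P →ₗ[k] P ⊗[k] C) (hδ : IsCoaction δ) (hGal : IsCGalois δ)
    (ψ : C ⊗[k] P →ₗ[k] P ⊗[k] C) (hψ : IsEntwining ψ) (hent : IsEntwinedOn δ ψ)
    (hcan : ∀ (c : C) (p : P) (t : P ⊗[k] P),
        canLift δ t = (1 : P) ⊗ₜ[k] c →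
        ψ (c ⊗ₜ[k] p) = canLift δ (t * ((1 : P) ⊗ₜ[k] p)))
    -- a linear lift of the translation map:
    (t : C →ₗ[k] P ⊗[k] P) (ht : ∀ c : C, canLift δ (t c) = (1 : P) ⊗ₜ[k] c) :
    -- (1) GT^C(B ⊆ P) is a group under convolution:
    ((∀ f g : C →ₗ[k] P, IsGaugeTransform δ ψ f → IsGaugeTransform δ ψ g →
        IsGaugeTransform δ ψ (conv f g)) ∧
     IsGaugeTransform δ ψ (convUnit (k := k) (P := P) (C := C)) ∧
     (∀ f g h : C →ₗ[k] P, conv (conv f g) h = conv f (conv g h)) ∧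
     (∀ f : C →ₗ[k] P, IsGaugeTransform δ ψ f →
        ∃ g : C →ₗ[k] P, IsGaugeTransform δ ψ g ∧
          conv f g = convUnit ∧ conv g f = convUnit)) ∧
    -- (2) f ↦ F_f and F ↦ f_F are mutually inverse group isomorphisms:
    ((∀ f : C →ₗ[k] P, IsGaugeTransform δ ψ f → IsGaugeAuto δ (autoOf δ f)) ∧
     (∀ F : P →ₗ[k] P, IsGaugeAuto δ F → IsGaugeTransform δ ψ (transformOf t F)) ∧
     (∀ f : C →ₗ[k] P, IsGaugeTransform δ ψ f → transformOf t (autoOf δ f) = f) ∧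
     (∀ F : P →ₗ[k] P, IsGaugeAuto δ F → autoOf δ (transformOf t F) = F) ∧
     (∀ f g : C →ₗ[k] P, IsGaugeTransform δ ψ f → IsGaugeTransform δ ψ g →
        autoOf δ (conv f g) = (autoOf δ g) ∘ₗ (autoOf δ f))) := by
  obtain ⟨hδ1, hδ2⟩ := hδ
  obtain ⟨hψ1, hψ2, hψ3, hψ4⟩ := hψ
  have hker := hGal.2
  refine ⟨⟨?_, ?_, conv_assoc, ?_⟩, ?_, ?_, ?_, ?_, ?_⟩
  · -- closure
    intro f g hf hg
    have hFf := GT_to_gauge hδ1 hδ2 hψ1 hψ2 hent hf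
    have hFg := GT_to_gauge hδ1 hδ2 hψ1 hψ2 hent hg
    have hcomp := comp_gauge hFf hFg
    have h1 : autoOf δ (conv f g) = autoOf δ g ∘ₗ autoOf δ f := by
      ext p
      exact (key1 hδ2 hent hf.2.2 g p).symm
    have h2 : conv f g = transformOf t (autoOf δ g ∘ₗ autoOf δ f) := by
      rw [← h1, transformOf_autoOf ht]
    rw [h2]
    exact gauge_to_GT hδ1 hδ2 hent hker ht hcomp
  · -- unit
    refine ⟨⟨convUnit, conv_unit_left convUnit, conv_unit_left convUnit⟩, ?_,
      unit_colinear hψ2⟩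
    exact (Funit (δ 1)).trans (hδ1 1)
  · -- inverses
    intro f hf
    have hFf := GT_to_gauge hδ1 hδ2 hψ1 hψ2 hent hf
    obtain ⟨F', hF', hFF', hF'F⟩ := inv_gauge hFf
    have hcoling := trans_colinear hδ2 hent hker ht hF'
    have hivF' : ∀ p, autoOf δ (transformOf t F') p = F' p :=
      autoOf_transformOf hker ht hF'.2.2.1
    refine ⟨transformOf t F', gauge_to_GT hδ1 hδ2 hent hker ht hF', ?_, ?_⟩
    · have hid : autoOf δ (conv f (transformOf t F')) = LinearMap.id := by
        ext p
        rw [← key1 hδ2 hent hf.2.2 (transformOf t F') p, hivF' (autoOf δ f p)]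
        exact hF'F p
      calc conv f (transformOf t F')
          = transformOf t (autoOf δ (conv f (transformOf t F'))) :=
            (transformOf_autoOf ht _).symm
        _ = transformOf t LinearMap.id := by rw [hid]
        _ = convUnit := transformOf_id hδ1 ht
    · have hid : autoOf δ (conv (transformOf t F') f) = LinearMap.id := by
        ext p
        rw [← key1 hδ2 hent hcoling f p, hivF' p]
        exact hFF' p
      calc conv (transformOf t F') f
          = transformOf t (autoOf δ (conv (transformOf t F') f)) :=
            (transformOf_autoOf ht _).symm
        _ = transformOf t LinearMap.id := by rw [hid]
        _ = convUnit := transformOf_id hδ1 ht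
  · -- f gauge transform → F_f gauge automorphism
    intro f hf
    exact GT_to_gauge hδ1 hδ2 hψ1 hψ2 hent hf
  · -- F gauge automorphism → f_F gauge transform
    intro F hF
    exact gauge_to_GT hδ1 hδ2 hent hker ht hF
  · -- transformOf ∘ autoOf = id
    intro f hf
    exact transformOf_autoOf ht f
  · -- autoOf ∘ transformOf = id
    intro F hF
    exact LinearMap.ext (autoOf_transformOf hker ht hF.2.2.1)
  · -- group (anti)homomorphism
    intro f g hf hg
    ext p
    exact (key1 hδ2 hent hf.2.2 g p).symm

end CGal
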